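/- Let c ∈ ℝ. Let f : ℝ → ℝ be strictly increasing and differentiable with f′(c) > 0, and let g : ℕ → ℝ be increasing (g(k) ≤ g(k+1)), concave (g(k+2) − g(k+1) ≤ g(k+1) − g(k)), bounded above, and positive (g(n) > 0 for all n ≥ 1). Define the variable-value function V(X) = f(Avg(X))·g(|X|). Then for all populations X and Y with V_CLc(X) > V_CLc(Y), there exists N such that every population Z with Avg(Z) = c and |Z| ≥ N satisfies V(X + Z) > V(Y + Z). -/

import Mathlib

/-- The size of a population: total number of welfare subjects. -/
noncomputable def psize (X : ℝ →₀ ℕ) : ℕ := X.sum fun _ n => n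

/-- Total welfare of a population. -/
noncomputable def ptot (X : ℝ →₀ ℕ) : ℝ := X.sum fun w n => (n : ℝ) * w

/-- Average welfare of a population. -/
noncomputable def pavg (X : ℝ →₀ ℕ) : ℝ := ptot X / (psize X : ℝ)

/-- Critical-level utilitarian value with critical level `c`. -/
noncomputable def vcl (c : ℝ) (X : ℝ →₀ ℕ) : ℝ := ptot X - c * (psize X : ℝ)

/-! Adding a population `Z` of average `c` and size `n` to `X` gives average
`c + V_CLc(X) / (|X| + n)`. For a bounded, increasing, concave `g` the increments satisfy
`n · (g (n + k) - g n) → 0`, so a first-order expansion of `f` at `c` yields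
`n · (V (X + Z) - f c · g n) → f' c · V_CLc(X) · sup g`. Subtracting the same limit for `Y`,
`n · (V (X + Z) - V (Y + Z))` tends to `f' c · (V_CLc(X) - V_CLc(Y)) · sup g > 0`. -/

open Filter Topology Asymptotics

lemma psize_eq_degree (X : ℝ →₀ ℕ) : psize X = X.degree := rfl

lemma psize_add (X Y : ℝ →₀ ℕ) : psize (X + Y) = psize X + psize Y := by
  simp only [psize_eq_degree, map_add]

lemma psize_pos {X : ℝ →₀ ℕ} (hX : X ≠ 0) : 0 < psize X := by
  rwa [pos_iff_ne_zero, psize_eq_degree, Ne, Finsupp.degree_eq_zero_iff]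

lemma ptot_add (X Y : ℝ →₀ ℕ) : ptot (X + Y) = ptot X + ptot Y :=
  Finsupp.sum_add_index' (fun _ => by simp) (fun _ _ _ => by push_cast; ring)

lemma pavg_add_of_pavg_eq (X : ℝ →₀ ℕ) {Z : ℝ →₀ ℕ} {c : ℝ} (hZ : Z ≠ 0) (hZc : pavg Z = c) :
    pavg (X + Z) = c + vcl c X / (psize X + psize Z : ℝ) := by
  have hZpos : (0 : ℝ) < psize Z := mod_cast psize_pos hZ
  have hZtot : ptot Z = c * psize Z := by
    rw [← hZc, pavg, div_mul_cancel₀ _ hZpos.ne']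
  rw [pavg, ptot_add, psize_add, hZtot, vcl]
  push_cast
  field_simp
  ring

section ConcaveSequence

variable {g : ℕ → ℝ}

lemma sub_le_mul_sub_of_antitone_sub (hg : Antitone fun k => g (k + 1) - g k) (k j : ℕ) :
    g (k + j) - g k ≤ j * (g (k + 1) - g k) := by
  induction j with
  | zero => simp
  | succ j ih =>
    have := hg (Nat.le_add_right k j)
    push_cast
    rw [← add_assoc]
    linarith

lemma mul_sub_le_sub_of_antitone_sub (hg : Antitone fun k => g (k + 1) - g k) (k j : ℕ) :
    j * (g (k + j + 1) - g (k + j)) ≤ g (k + j) - g k := by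
  induction j with
  | zero => simp
  | succ j ih =>
    have := hg (Nat.le_succ (k + j))
    push_cast
    rw [← add_assoc]
    nlinarith [(Nat.cast_nonneg j : (0 : ℝ) ≤ j)]

lemma tendsto_natCast_mul_sub_succ (hmono : Monotone g) (hg : Antitone fun k => g (k + 1) - g k)
    (hbdd : BddAbove (Set.range g)) :
    Tendsto (fun n : ℕ => n * (g (n + 1) - g n)) atTop (𝓝 0) := by
  have hlim := tendsto_atTop_ciSup hmono hbdd
  have hhalf : Tendsto (fun n : ℕ => 2 * (g n - g (n / 2))) atTop (𝓝 0) := by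
    simpa using ((hlim.sub (hlim.comp (Nat.tendsto_div_const_atTop two_ne_zero))).const_mul 2)
  refine squeeze_zero (fun n => mul_nonneg n.cast_nonneg (sub_nonneg.2 (hmono n.le_succ)))
    (fun n => ?_) hhalf
  -- the last `n - n / 2` increments below `n` are each at least `g (n + 1) - g n`
  have hsplit : n / 2 + (n - n / 2) = n := by omega
  have h := mul_sub_le_sub_of_antitone_sub hg (n / 2) (n - n / 2)
  rw [hsplit] at h
  have hn : (n : ℝ) ≤ 2 * (n - n / 2 : ℕ) := by exact_mod_cast (by omega : n ≤ 2 * (n - n / 2))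
  nlinarith [sub_nonneg.2 (hmono n.le_succ)]

lemma tendsto_natCast_mul_sub_add (hmono : Monotone g) (hg : Antitone fun k => g (k + 1) - g k)
    (hbdd : BddAbove (Set.range g)) (k : ℕ) :
    Tendsto (fun n : ℕ => n * (g (n + k) - g n)) atTop (𝓝 0) := by
  have h := (tendsto_natCast_mul_sub_succ hmono hg hbdd).const_mul (k : ℝ)
  rw [mul_zero] at h
  refine squeeze_zero (fun n => mul_nonneg n.cast_nonneg (sub_nonneg.2 (hmono (n.le_add_right k))))
    (fun n => ?_) h
  have := mul_le_mul_of_nonneg_left (sub_le_mul_sub_of_antitone_sub hg n k) n.cast_nonneg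
  linarith

end ConcaveSequence

lemma HasDerivAt.tendsto_mul_sub_of_tendsto {α : Type*} {l : Filter α} {f : ℝ → ℝ} {f' x a : ℝ}
    {k u : α → ℝ} (hf : HasDerivAt f f' x) (hu : Tendsto u l (𝓝 x))
    (hku : Tendsto (fun t => k t * (u t - x)) l (𝓝 a)) :
    Tendsto (fun t => k t * (f (u t) - f x)) l (𝓝 (f' * a)) := by
  have hrem : (fun t => k t * (f (u t) - f x - (u t - x) * f')) =o[l] fun _ => (1 : ℝ) :=
    ((isBigO_refl k l).mul_isLittleO (hf.isLittleO.comp_tendsto hu)).trans_isBigO (hku.isBigO_one ℝ)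
  have h := ((isLittleO_one_iff ℝ).1 hrem).add (hku.const_mul f')
  rw [zero_add] at h
  exact h.congr fun t => by ring

lemma tendsto_natCast_mul_sub_mul {f : ℝ → ℝ} {g : ℕ → ℝ} {f' c : ℝ} (hf : HasDerivAt f f' c)
    (hmono : Monotone g) (hg : Antitone fun k => g (k + 1) - g k) (hbdd : BddAbove (Set.range g))
    (A : ℝ) (m : ℕ) :
    Tendsto (fun n : ℕ => n * (f (c + A / (m + n)) * g (m + n) - f c * g n)) atTop
      (𝓝 (f' * A * ⨆ i, g i)) := by
  have hden : Tendsto (fun n : ℕ => (m : ℝ) + n) atTop atTop :=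
    tendsto_atTop_add_const_left _ _ tendsto_natCast_atTop_atTop
  have hu : Tendsto (fun n : ℕ => c + A / (m + n)) atTop (𝓝 c) := by
    simpa using tendsto_const_nhds.add (tendsto_const_nhds.div_atTop hden)
  have hku : Tendsto (fun n : ℕ => n * (c + A / (m + n) - c)) atTop (𝓝 A) := by
    have h := (tendsto_natCast_div_add_atTop (m : ℝ)).const_mul A
    rw [mul_one] at h
    refine h.congr fun n => ?_
    rw [add_sub_cancel_left, add_comm (n : ℝ)]
    ring
  have hshift : Tendsto (fun n : ℕ => g (n + m)) atTop (𝓝 (⨆ i, g i)) :=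
    (tendsto_atTop_ciSup hmono hbdd).comp (tendsto_add_atTop_nat m)
  have h := ((hf.tendsto_mul_sub_of_tendsto hu hku).mul hshift).add
    ((tendsto_natCast_mul_sub_add hmono hg hbdd m).const_mul (f c))
  rw [mul_zero, add_zero] at h
  refine h.congr fun n => ?_
  rw [add_comm m n]
  ring

theorem stmt_5_general (c : ℝ) (f : ℝ → ℝ) (g : ℕ → ℝ)
    (hfderiv : deriv f c > 0)
    (hgmono : ∀ k, g k ≤ g (k + 1))
    (hgconc : ∀ k, g (k + 2) - g (k + 1) ≤ g (k + 1) - g k)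
    (hgbdd : BddAbove (Set.range g))
    (hgpos : ∀ n : ℕ, n ≥ 1 → g n > 0)
    (V : (ℝ →₀ ℕ) → ℝ) (hV : ∀ X : ℝ →₀ ℕ, V X = f (pavg X) * g (psize X))
    (X Y : ℝ →₀ ℕ)
    (hcl : vcl c X > vcl c Y) :
    ∃ N : ℕ, ∀ Z : ℝ →₀ ℕ, Z ≠ 0 → pavg Z = c → psize Z ≥ N →
      V (X + Z) > V (Y + Z) := by
  have hf : HasDerivAt f (deriv f c) c := (differentiableAt_of_deriv_ne_zero hfderiv.ne').hasDerivAt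
  have hmono : Monotone g := monotone_nat_of_le_succ hgmono
  have hconc : Antitone fun k => g (k + 1) - g k := antitone_nat_of_succ_le hgconc
  have hsup : 0 < ⨆ i, g i := (hgpos 1 le_rfl).trans_le (le_ciSup hgbdd 1)
  have hlim := (tendsto_natCast_mul_sub_mul hf hmono hconc hgbdd (vcl c X) (psize X)).sub
    (tendsto_natCast_mul_sub_mul hf hmono hconc hgbdd (vcl c Y) (psize Y))
  have hpos : 0 < deriv f c * vcl c X * (⨆ i, g i) - deriv f c * vcl c Y * ⨆ i, g i := by
    rw [← sub_mul, ← mul_sub]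
    exact mul_pos (mul_pos hfderiv (sub_pos.2 hcl)) hsup
  obtain ⟨N, hN⟩ := eventually_atTop.1 (hlim.eventually (eventually_gt_nhds hpos))
  refine ⟨N, fun Z hZ hZc hZN => ?_⟩
  rw [hV, hV, pavg_add_of_pavg_eq X hZ hZc, pavg_add_of_pavg_eq Y hZ hZc, psize_add, psize_add]
  have h := hN _ hZN
  rw [← mul_sub, sub_sub_sub_cancel_right] at h
  exact sub_pos.1 (pos_of_mul_pos_right h (Nat.cast_nonneg _))

theorem stmt_5 (c : ℝ) (f : ℝ → ℝ) (g : ℕ → ℝ)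
    (hfmono : StrictMono f) (hfdiff : Differentiable ℝ f) (hfderiv : deriv f c > 0)
    (hgmono : ∀ k, g k ≤ g (k + 1))
    (hgconc : ∀ k, g (k + 2) - g (k + 1) ≤ g (k + 1) - g k)
    (hgbdd : BddAbove (Set.range g))
    (hgpos : ∀ n : ℕ, n ≥ 1 → g n > 0)
    (V : (ℝ →₀ ℕ) → ℝ) (hV : ∀ X : ℝ →₀ ℕ, V X = f (pavg X) * g (psize X))
    (X Y : ℝ →₀ ℕ) (hX : X ≠ 0) (hY : Y ≠ 0)
    (hcl : vcl c X > vcl c Y) :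
    ∃ N : ℕ, ∀ Z : ℝ →₀ ℕ, Z ≠ 0 → pavg Z = c → psize Z ≥ N →
      V (X + Z) > V (Y + Z) :=
  stmt_5_general c f g hfderiv hgmono hgconc hgbdd hgpos V hV X Y hcl
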